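/- arXiv:2310.04966 — 3 statements merged into one kernel-verified Lean document; each statement's English description precedes it below -/
import Mathlib

section
/- Let U have orthonormal columns and y* = argmin_y ‖U y − b‖_2^2. If ‖U^T S^T S U − I‖_2 ≤ 1/2 and ‖U^T S^T S (b − U y*)‖_2^2 ≤ ε ‖b − U y*‖_2^2, then the minimizer ỹ* of ‖S U y − S b‖_2^2 satisfies ‖U ỹ* − b‖_2^2 ≤ (1 + 4ε) ‖U y* − b‖_2^2. -/
open Matrix
open scoped Matrix.Norms.L2Operator

/-!
At the true minimiser `y*` the residual `r = U y* - b` is orthogonal to the columns of `U`, so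
`‖U ỹ* - b‖² = ‖r‖² + ‖ỹ* - y*‖²` by Pythagoras. The sketched normal equations say
`(UᵀSᵀSU)(ỹ* - y*) = UᵀSᵀS(b - U y*)`, and since `UᵀSᵀSU` is within `1/2` of the identity,
`‖ỹ* - y*‖ ≤ 2 ‖UᵀSᵀS(b - U y*)‖`; squaring and using the matrix-vector condition gives
`‖ỹ* - y*‖² ≤ 4ε ‖r‖²`.
-/

variable {k m n : Type*} [Fintype k] [Fintype m] [Fintype n]

lemma sum_sq_eq_dotProduct_self (v : n → ℝ) : ∑ i, v i ^ 2 = v ⬝ᵥ v := by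
  simp [dotProduct, sq]

lemma norm_toLp_sq_eq_dotProduct_self (v : n → ℝ) : ‖WithLp.toLp 2 v‖ ^ 2 = v ⬝ᵥ v := by
  rw [EuclideanSpace.real_norm_sq_eq, ← sum_sq_eq_dotProduct_self]

section OrthonormalColumns

variable [DecidableEq n] {U : Matrix m n ℝ}

lemma dotProduct_self_add_mulVec (hU : Uᵀ * U = 1) (r : m → ℝ) (x : n → ℝ) :
    (r + U *ᵥ x) ⬝ᵥ (r + U *ᵥ x) = r ⬝ᵥ r + 2 * (x ⬝ᵥ (Uᵀ *ᵥ r)) + x ⬝ᵥ x := by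
  have hcross (v : m → ℝ) : (U *ᵥ x) ⬝ᵥ v = x ⬝ᵥ (Uᵀ *ᵥ v) := by
    rw [dotProduct_mulVec, vecMul_transpose]
  rw [add_dotProduct, dotProduct_add, dotProduct_add, dotProduct_comm r (U *ᵥ x), hcross, hcross,
    mulVec_mulVec, hU, one_mulVec]
  ring

lemma transpose_mulVec_residual_eq_zero (hU : Uᵀ * U = 1) {b : m → ℝ} {y₀ : n → ℝ}
    (hmin : ∀ y, (U *ᵥ y₀ - b) ⬝ᵥ (U *ᵥ y₀ - b) ≤ (U *ᵥ y - b) ⬝ᵥ (U *ᵥ y - b)) :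
    Uᵀ *ᵥ (U *ᵥ y₀ - b) = 0 := by
  set g := Uᵀ *ᵥ (U *ᵥ y₀ - b)
  have hstep : U *ᵥ (y₀ - g) - b = (U *ᵥ y₀ - b) + U *ᵥ (-g) := by
    rw [mulVec_sub, mulVec_neg]; abel
  have h := hmin (y₀ - g)
  rw [hstep, dotProduct_self_add_mulVec hU] at h
  simp only [neg_dotProduct, dotProduct_neg, neg_neg] at h
  have hg : g ⬝ᵥ g ≤ 0 := by linarith
  exact dotProduct_self_eq_zero.mp (le_antisymm hg (dotProduct_self_star_nonneg g))

end OrthonormalColumns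

lemma sketched_gram_mulVec_sub_eq {R : Type*} [CommRing R] (S : Matrix k m R) (U : Matrix m n R)
    (b : m → R) (y₀ y₁ : n → R) (hnormal : (S * U)ᵀ *ᵥ ((S * U) *ᵥ y₁ - S *ᵥ b) = 0) :
    (Uᵀ * Sᵀ * S * U) *ᵥ (y₁ - y₀) = Uᵀ *ᵥ (Sᵀ *ᵥ (S *ᵥ (b - U *ᵥ y₀))) := by
  simp only [transpose_mul, mulVec_sub, mulVec_mulVec, Matrix.mul_assoc, sub_eq_zero] at hnormal ⊢
  rw [hnormal]

lemma mul_norm_le_norm_mulVec_of_norm_sub_one_le {𝕜 : Type*} [RCLike 𝕜] [DecidableEq n]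
    {M : Matrix n n 𝕜} {c : ℝ} (hM : ‖M - 1‖ ≤ c) (x : n → 𝕜) :
    (1 - c) * ‖WithLp.toLp 2 x‖ ≤ ‖WithLp.toLp 2 (M *ᵥ x)‖ := by
  have hsplit : x = M *ᵥ x - (M - 1) *ᵥ x := by
    rw [sub_mulVec, one_mulVec, sub_sub_cancel]
  have hpert : ‖WithLp.toLp 2 ((M - 1) *ᵥ x)‖ ≤ c * ‖WithLp.toLp 2 x‖ :=
    (l2_opNorm_mulVec (M - 1) (WithLp.toLp 2 x)).trans
      (mul_le_mul_of_nonneg_right hM (norm_nonneg _))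
  have htriangle := norm_sub_le (WithLp.toLp 2 (M *ᵥ x) : EuclideanSpace 𝕜 n)
    (WithLp.toLp 2 ((M - 1) *ᵥ x))
  rw [← WithLp.toLp_sub, ← hsplit] at htriangle
  linarith

lemma dotProduct_self_le_four_mul_of_norm_sub_one_le_half [DecidableEq n] {M : Matrix n n ℝ}
    (hM : ‖M - 1‖ ≤ 1 / 2) (w : n → ℝ) : w ⬝ᵥ w ≤ 4 * ((M *ᵥ w) ⬝ᵥ (M *ᵥ w)) := by
  have h := mul_norm_le_norm_mulVec_of_norm_sub_one_le hM w
  rw [← norm_toLp_sq_eq_dotProduct_self, ← norm_toLp_sq_eq_dotProduct_self]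
  nlinarith [norm_nonneg (WithLp.toLp 2 w)]

theorem subsampled_regression_bound_general (n d k : ℕ)
    (U : Matrix (Fin n) (Fin d) ℝ) (S : Matrix (Fin k) (Fin n) ℝ)
    (b : Fin n → ℝ) (ε : ℝ) (hU : Uᵀ * U = 1)
    (ystar ytilde : Fin d → ℝ)
    (hmin : ∀ y : Fin d → ℝ,
      ∑ i, (U *ᵥ ystar - b) i ^ 2 ≤ ∑ i, (U *ᵥ y - b) i ^ 2)
    (hnormal : (S * U)ᵀ *ᵥ ((S * U) *ᵥ ytilde - S *ᵥ b) = 0)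
    (hembed : ‖Uᵀ * Sᵀ * S * U - 1‖ ≤ 1 / 2)
    (hmatvec : ∑ j, (Uᵀ *ᵥ (Sᵀ *ᵥ (S *ᵥ (b - U *ᵥ ystar)))) j ^ 2 ≤
      ε * ∑ i, (b - U *ᵥ ystar) i ^ 2) :
    ∑ i, (U *ᵥ ytilde - b) i ^ 2 ≤ (1 + 4 * ε) * ∑ i, (U *ᵥ ystar - b) i ^ 2 := by
  simp only [sum_sq_eq_dotProduct_self] at hmin hmatvec ⊢
  set r := U *ᵥ ystar - b
  set w := ytilde - ystar
  have hr : Uᵀ *ᵥ r = 0 := transpose_mulVec_residual_eq_zero hU hmin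
  have hw : w ⬝ᵥ w ≤ 4 * ε * (r ⬝ᵥ r) := by
    have h := dotProduct_self_le_four_mul_of_norm_sub_one_le_half hembed w
    rw [sketched_gram_mulVec_sub_eq S U b ystar ytilde hnormal] at h
    have hneg : (b - U *ᵥ ystar) ⬝ᵥ (b - U *ᵥ ystar) = r ⬝ᵥ r := by
      rw [← neg_sub, neg_dotProduct_neg]
    rw [hneg] at hmatvec
    linarith
  have hresidual : U *ᵥ ytilde - b = r + U *ᵥ w := by
    simp only [r, w, mulVec_sub]; abel
  rw [hresidual, dotProduct_self_add_mulVec hU, hr, dotProduct_zero]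
  linarith

/-- Main regression bound: under the subspace embedding and approximate matrix-vector
multiplication conditions, the subsampled least-squares solution `ỹ*` satisfies
`‖U ỹ* − b‖₂² ≤ (1 + 4ε) ‖U y* − b‖₂²`. -/
theorem subsampled_regression_bound (n d k : ℕ)
    (U : Matrix (Fin n) (Fin d) ℝ) (S : Matrix (Fin k) (Fin n) ℝ)
    (b : Fin n → ℝ) (ε : ℝ) (hε : 0 < ε) (hU : Uᵀ * U = 1)
    (hrank : (S * U).rank = d)
    (ystar ytilde : Fin d → ℝ)
    (hmin : ∀ y : Fin d → ℝ,
      ∑ i, (U *ᵥ ystar - b) i ^ 2 ≤ ∑ i, (U *ᵥ y - b) i ^ 2)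
    (hnormal : (S * U)ᵀ *ᵥ ((S * U) *ᵥ ytilde - S *ᵥ b) = 0)
    (hembed : ‖Uᵀ * Sᵀ * S * U - 1‖ ≤ 1 / 2)
    (hmatvec : ∑ j, (Uᵀ *ᵥ (Sᵀ *ᵥ (S *ᵥ (b - U *ᵥ ystar)))) j ^ 2 ≤
      ε * ∑ i, (b - U *ᵥ ystar) i ^ 2) :
    ∑ i, (U *ᵥ ytilde - b) i ^ 2 ≤ (1 + 4 * ε) * ∑ i, (U *ᵥ ystar - b) i ^ 2 :=
  subsampled_regression_bound_general n d k U S b ε hU ystar ytilde hmin hnormal hembed hmatvec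
end

section
/- Let ξ_1,...,ξ_n be {0,1}-valued random variables with marginals E[ξ_i] = p̃_i ∈ (0,1], covariances c_{il} = E[ξ_iξ_l] − p̃_ip̃_l, and suppose for every i, Σ_l |E[ξ_iξ_l]/p̃_i − p̃_l| ≤ D. Then for any real weights w_1,...,w_n, E[(Σ_i (ξ_i/p̃_i − 1) w_i)^2] ≤ D Σ_i w_i^2 / p̃_i. -/
open MeasureTheory ProbabilityTheory

/-!
Writing `ξᵢ/p̃ᵢ - 1 = (ξᵢ - 𝔼ξᵢ)/p̃ᵢ`, the left-hand side is the quadratic form of the covariance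
matrix `C` at `x = w/p̃`. For a symmetric matrix, `2|xᵢ xₗ| ≤ xᵢ² + xₗ²` bounds that quadratic form
by `∑ᵢ xᵢ² ∑ₗ |Cᵢₗ|`, and the hypothesis says exactly that `∑ₗ |Cᵢₗ| ≤ D p̃ᵢ`, since
`Cᵢₗ = p̃ᵢ (𝔼[ξᵢξₗ]/p̃ᵢ - p̃ₗ)`.
-/

theorem sum_sum_mul_le_sum_sq_mul_sum_abs {ι : Type*} [Fintype ι] {C : ι → ι → ℝ}
    (hC : ∀ i l, C i l = C l i) (x : ι → ℝ) :
    ∑ i, ∑ l, x i * x l * C i l ≤ ∑ i, x i ^ 2 * ∑ l, |C i l| := by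
  have hterm : ∀ i l, x i * x l * C i l ≤ (x i ^ 2 * |C i l| + x l ^ 2 * |C l i|) / 2 := by
    intro i l
    have hamgm : 2 * (|x i| * |x l|) ≤ x i ^ 2 + x l ^ 2 := by
      simpa only [sq_abs, mul_assoc] using two_mul_le_add_sq |x i| |x l|
    have habs : x i * x l * C i l ≤ |x i| * |x l| * |C i l| := by
      rw [← abs_mul, ← abs_mul]
      exact le_abs_self _
    rw [hC l i]
    nlinarith [abs_nonneg (C i l)]
  calc ∑ i, ∑ l, x i * x l * C i l
      ≤ ∑ i, ∑ l, (x i ^ 2 * |C i l| + x l ^ 2 * |C l i|) / 2 := by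
        gcongr with i _ l _
        exact hterm i l
    _ = ∑ i, x i ^ 2 * ∑ l, |C i l| := by
        simp only [← Finset.sum_div, Finset.sum_add_distrib, Finset.mul_sum]
        rw [Finset.sum_comm (f := fun i l => x l ^ 2 * |C l i|)]
        ring

theorem integral_sq_sum_sub_integral_mul_eq_sum_covariance {Ω ι : Type*} [MeasurableSpace Ω]
    [Fintype ι] {μ : Measure Ω} [IsFiniteMeasure μ] {X : ι → Ω → ℝ} (hX : ∀ i, MemLp (X i) 2 μ)
    (x : ι → ℝ) :
    ∫ ω, (∑ i, (X i ω - μ[X i]) * x i) ^ 2 ∂μ = ∑ i, ∑ l, x i * x l * cov[X i, X l; μ] := by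
  have hcentered : ∀ i, MemLp (fun ω => X i ω - μ[X i]) 2 μ :=
    fun i => (hX i).sub (memLp_const _)
  have hint : ∀ i l,
      Integrable (fun ω => x i * x l * ((X i ω - μ[X i]) * (X l ω - μ[X l]))) μ :=
    fun i l => ((hcentered i).integrable_mul (hcentered l)).const_mul _
  calc ∫ ω, (∑ i, (X i ω - μ[X i]) * x i) ^ 2 ∂μ
      = ∫ ω, ∑ i, ∑ l, x i * x l * ((X i ω - μ[X i]) * (X l ω - μ[X l])) ∂μ := by
        congr with ω
        rw [sq, Finset.sum_mul_sum]
        exact Finset.sum_congr rfl fun i _ => Finset.sum_congr rfl fun l _ => by ring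
    _ = ∑ i, ∑ l, x i * x l * cov[X i, X l; μ] := by
        rw [integral_finsetSum _ fun i _ => integrable_finsetSum _ fun l _ => hint i l]
        refine Finset.sum_congr rfl fun i _ => ?_
        rw [integral_finsetSum _ fun l _ => hint i l]
        exact Finset.sum_congr rfl fun l _ => integral_const_mul _ _

theorem memLp_of_forall_eq_zero_or_eq_one {Ω : Type*} [MeasurableSpace Ω] {μ : Measure Ω}
    [IsFiniteMeasure μ] {f : Ω → ℝ} (hf : Measurable f) (hbin : ∀ ω, f ω = 0 ∨ f ω = 1)
    (q : ENNReal) : MemLp f q μ :=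
  MemLp.of_bound hf.aestronglyMeasurable 1 <| ae_of_all _ fun ω => by
    rcases hbin ω with h | h <;> simp [h]

/-- Variance bound under the one-sided `ℓ∞`-independence condition with `S = ∅`:
for binary random variables `ξ_i` with marginals `p̃_i` and
`Σ_l |E[ξ_i ξ_l]/p̃_i − p̃_l| ≤ D` for all `i`, one has
`E[(Σ_i (ξ_i/p̃_i − 1) w_i)²] ≤ D Σ_i w_i²/p̃_i`. -/
theorem weighted_variance_bound_linfty_indep {Ω : Type*} [MeasurableSpace Ω]
    (μ : Measure Ω) [IsProbabilityMeasure μ] (n : ℕ)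
    (ξ : Fin n → Ω → ℝ) (hmeas : ∀ i, Measurable (ξ i))
    (hbin : ∀ i ω, ξ i ω = 0 ∨ ξ i ω = 1)
    (p : Fin n → ℝ) (hp : ∀ i, p i ∈ Set.Ioc (0 : ℝ) 1)
    (hmarg : ∀ i, (∫ ω, ξ i ω ∂μ) = p i)
    (D : ℝ)
    (hinf : ∀ i, ∑ l, |(∫ ω, ξ i ω * ξ l ω ∂μ) / p i - p l| ≤ D)
    (w : Fin n → ℝ) :
    (∫ ω, (∑ i, (ξ i ω / p i - 1) * w i) ^ 2 ∂μ) ≤ D * ∑ i, w i ^ 2 / p i := by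
  have hp0 : ∀ i, 0 < p i := fun i => (hp i).1
  have hL2 : ∀ i, MemLp (ξ i) 2 μ := fun i =>
    memLp_of_forall_eq_zero_or_eq_one (hmeas i) (hbin i) 2
  have hcentered : ∀ ω, ∑ i, (ξ i ω / p i - 1) * w i = ∑ i, (ξ i ω - μ[ξ i]) * (w i / p i) :=
    fun ω => Finset.sum_congr rfl fun i _ => by
      rw [hmarg]
      field_simp [(hp0 i).ne']
  have hcov : ∀ i l, |cov[ξ i, ξ l; μ]| / p i = |(∫ ω, ξ i ω * ξ l ω ∂μ) / p i - p l| := by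
    intro i l
    rw [covariance_eq_sub (hL2 i) (hL2 l), hmarg, hmarg, ← abs_of_pos (hp0 i), ← abs_div,
      abs_of_pos (hp0 i), sub_div, mul_div_cancel_left₀ _ (hp0 i).ne']
    rfl
  calc ∫ ω, (∑ i, (ξ i ω / p i - 1) * w i) ^ 2 ∂μ
      = ∑ i, ∑ l, w i / p i * (w l / p l) * cov[ξ i, ξ l; μ] := by
        simp_rw [hcentered]
        exact integral_sq_sum_sub_integral_mul_eq_sum_covariance hL2 _
    _ ≤ ∑ i, (w i / p i) ^ 2 * ∑ l, |cov[ξ i, ξ l; μ]| :=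
        sum_sum_mul_le_sum_sq_mul_sum_abs (fun i l => covariance_comm _ _) _
    _ = ∑ i, w i ^ 2 / p i * ∑ l, |(∫ ω, ξ i ω * ξ l ω ∂μ) / p i - p l| := by
        refine Finset.sum_congr rfl fun i _ => ?_
        simp_rw [← hcov, ← Finset.sum_div]
        field_simp [(hp0 i).ne']
    _ ≤ ∑ i, w i ^ 2 / p i * D := by
        gcongr with i _
        · exact div_nonneg (sq_nonneg _) (hp0 i).le
        · exact hinf i
    _ = D * ∑ i, w i ^ 2 / p i := by
        rw [Finset.mul_sum]
        exact Finset.sum_congr rfl fun i _ => mul_comm _ _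
end

section
/- Let ξ_1,...,ξ_n be binary random variables satisfying k-homogeneity (Σ_i ξ_i = k always) and pairwise negative correlation conditioned on any set S of coordinates being 1. Then the one-sided influence matrix satisfies Σ_j |I_μ^S(i,j)| = 2(1 − q_i) ≤ 2 for every i ∉ S, where q_i = Pr[ξ_i=1 | ξ_ℓ=1 ∀ℓ∈S]; i.e., the distribution is one-sided ℓ∞-independent with parameter 2. -/
/-!
By `k`-homogeneity the marginals conditioned on `C` and on `E i ∩ C` both sum to `k`, so the
signed influences `I(i, j)` sum to zero (each `j ∈ S` contributes `1 - 1`). Conditional negative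
correlation makes every `I(i, j)` with `j ≠ i` nonpositive, hence the absolute values sum to twice
the diagonal entry `I(i, i) = 1 - q_i`.
-/

open MeasureTheory Finset
open scoped Classical ENNReal

theorem Finset.sum_abs_eq_two_mul_of_sum_eq_zero {ι R : Type*} [Fintype ι] [CommRing R]
    [LinearOrder R] [IsStrictOrderedRing R] (t : ι → R) (i : ι) (hsum : ∑ j, t j = 0)
    (hle : ∀ j ≠ i, t j ≤ 0) : ∑ j, |t j| = 2 * t i := by
  have hsplit := add_sum_erase univ t (mem_univ i)
  have hrest : ∑ j ∈ univ.erase i, |t j| = -∑ j ∈ univ.erase i, t j := by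
    rw [← sum_neg_distrib]
    exact sum_congr rfl fun j hj => abs_of_nonpos (hle j (ne_of_mem_erase hj))
  have hnonpos : ∑ j ∈ univ.erase i, t j ≤ 0 :=
    sum_nonpos fun j hj => hle j (ne_of_mem_erase hj)
  rw [← add_sum_erase _ _ (mem_univ i), hrest, abs_of_nonneg (by linarith)]
  linear_combination -hsplit - hsum

namespace MeasureTheory

variable {Ω ι : Type*} [MeasurableSpace Ω] [Fintype ι] {μ : Measure Ω} {E : ι → Set Ω} {k : ℕ}

theorem sum_measure_inter_eq_card_mul (hE : ∀ j, MeasurableSet (E j))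
    (hhom : ∀ ω, #{j | ω ∈ E j} = k) (A : Set Ω) :
    ∑ j, μ (E j ∩ A) = k * μ A := by
  have hcount : ∀ ω, ∑ j, (E j).indicator (1 : Ω → ℝ≥0∞) ω = k := fun ω => by
    simp [Set.indicator_apply, ← hhom ω]
  calc ∑ j, μ (E j ∩ A) = ∑ j, ∫⁻ ω in A, (E j).indicator 1 ω ∂μ := by
        simp only [lintegral_indicator_one (hE _), Measure.restrict_apply (hE _)]
    _ = ∫⁻ ω in A, ∑ j, (E j).indicator 1 ω ∂μ :=
        (lintegral_finsetSum _ fun j _ => measurable_one.indicator (hE j)).symm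
    _ = k * μ A := by simp only [hcount, setLIntegral_const]

theorem sum_measureReal_inter_div_eq_card (hE : ∀ j, MeasurableSet (E j))
    (hhom : ∀ ω, #{j | ω ∈ E j} = k) {A : Set Ω} (hA : μ.real A ≠ 0) :
    ∑ j, μ.real (E j ∩ A) / μ.real A = k := by
  have hA_top : μ A ≠ ∞ := fun h => hA (by simp [measureReal_def, h])
  have hfin : ∀ j ∈ univ, μ (E j ∩ A) ≠ ∞ := fun j _ =>
    ne_top_of_le_ne_top hA_top (measure_mono Set.inter_subset_right)
  rw [← sum_div, div_eq_iff hA]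
  simp only [measureReal_def]
  rw [← ENNReal.toReal_sum hfin, sum_measure_inter_eq_card_mul hE hhom, ENNReal.toReal_mul,
    ENNReal.toReal_natCast]

theorem measureReal_inter_div_eq_one {A B : Set Ω} (hAB : A ⊆ B) (hA : μ.real A ≠ 0) :
    μ.real (B ∩ A) / μ.real A = 1 := by
  rw [Set.inter_eq_right.mpr hAB, div_self hA]

end MeasureTheory

theorem influence_row_sum_le_two_general {Ω : Type*} [MeasurableSpace Ω]
    (μ : Measure Ω) (n k : ℕ)
    (E : Fin n → Set Ω) (hE : ∀ i, MeasurableSet (E i))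
    (hhom : ∀ ω : Ω, (Finset.univ.filter (fun j : Fin n => ω ∈ E j)).card = k)
    (S : Finset (Fin n)) (i : Fin n) (hi : i ∉ S)
    (C : Set Ω) (hC : C = ⋂ ℓ ∈ S, E ℓ)
    (hCpos : 0 < (μ C).toReal) (hiCpos : 0 < (μ (E i ∩ C)).toReal)
    (hCNC : ∀ a b : Fin n, a ∉ S → b ∉ S → a ≠ b →
      (μ (E a ∩ E b ∩ C)).toReal * (μ C).toReal ≤ (μ (E a ∩ C)).toReal * (μ (E b ∩ C)).toReal) :
    (∑ j, |if j ∈ S then (0 : ℝ) else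
        (μ (E j ∩ (E i ∩ C))).toReal / (μ (E i ∩ C)).toReal - (μ (E j ∩ C)).toReal / (μ C).toReal|)
        = 2 * (1 - (μ (E i ∩ C)).toReal / (μ C).toReal) ∧
      (∑ j, |if j ∈ S then (0 : ℝ) else
        (μ (E j ∩ (E i ∩ C))).toReal / (μ (E i ∩ C)).toReal - (μ (E j ∩ C)).toReal / (μ C).toReal|)
        ≤ 2 := by
  simp only [← measureReal_def] at hCpos hiCpos hCNC ⊢
  set t : Fin n → ℝ := fun j => if j ∈ S then 0 else
    μ.real (E j ∩ (E i ∩ C)) / μ.real (E i ∩ C) - μ.real (E j ∩ C) / μ.real C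
  have hCE : ∀ j ∈ S, C ⊆ E j := fun j hj => hC ▸ Set.biInter_subset_of_mem hj
  -- on `S` both conditional probabilities are `1`, so the `if` only drops zero terms
  have ht : ∀ j, t j = μ.real (E j ∩ (E i ∩ C)) / μ.real (E i ∩ C) - μ.real (E j ∩ C) / μ.real C := by
    intro j
    by_cases hj : j ∈ S
    · rw [measureReal_inter_div_eq_one (Set.inter_subset_right.trans (hCE j hj)) hiCpos.ne',
        measureReal_inter_div_eq_one (hCE j hj) hCpos.ne', sub_self]
      simp [t, hj]
    · simp [t, hj]
  have hsum : ∑ j, t j = 0 := by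
    rw [sum_congr rfl fun j _ => ht j, sum_sub_distrib,
      sum_measureReal_inter_div_eq_card hE hhom hiCpos.ne',
      sum_measureReal_inter_div_eq_card hE hhom hCpos.ne', sub_self]
  have hle : ∀ j ≠ i, t j ≤ 0 := by
    intro j hji
    by_cases hj : j ∈ S
    · simp [t, hj]
    · rw [ht, sub_nonpos, div_le_div_iff₀ hiCpos hCpos, ← Set.inter_assoc]
      exact hCNC j i hj hi hji
  have hti : t i = 1 - μ.real (E i ∩ C) / μ.real C := by
    rw [ht, ← Set.inter_assoc, Set.inter_self, div_self hiCpos.ne']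
  have hq : 0 ≤ μ.real (E i ∩ C) / μ.real C := by positivity
  rw [sum_abs_eq_two_mul_of_sum_eq_zero t i hsum hle, hti]
  exact ⟨rfl, by linarith⟩

/-- A `k`-homogeneous distribution of binary variables satisfying conditional pairwise
negative correlation has one-sided influence row sums `Σ_j |I_μ^S(i,j)| = 2(1 − q_i) ≤ 2`,
i.e., it is one-sided `ℓ∞`-independent with parameter 2. -/
theorem influence_row_sum_le_two {Ω : Type*} [MeasurableSpace Ω]
    (μ : Measure Ω) [IsProbabilityMeasure μ] (n k : ℕ)
    (E : Fin n → Set Ω) (hE : ∀ i, MeasurableSet (E i))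
    (hhom : ∀ ω : Ω, (Finset.univ.filter (fun j : Fin n => ω ∈ E j)).card = k)
    (S : Finset (Fin n)) (i : Fin n) (hi : i ∉ S)
    (C : Set Ω) (hC : C = ⋂ ℓ ∈ S, E ℓ)
    (hCpos : 0 < (μ C).toReal) (hiCpos : 0 < (μ (E i ∩ C)).toReal)
    (hCNC : ∀ a b : Fin n, a ∉ S → b ∉ S → a ≠ b →
      (μ (E a ∩ E b ∩ C)).toReal * (μ C).toReal ≤ (μ (E a ∩ C)).toReal * (μ (E b ∩ C)).toReal) :
    (∑ j, |if j ∈ S then (0 : ℝ) else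
        (μ (E j ∩ (E i ∩ C))).toReal / (μ (E i ∩ C)).toReal - (μ (E j ∩ C)).toReal / (μ C).toReal|)
        = 2 * (1 - (μ (E i ∩ C)).toReal / (μ C).toReal) ∧
      (∑ j, |if j ∈ S then (0 : ℝ) else
        (μ (E j ∩ (E i ∩ C))).toReal / (μ (E i ∩ C)).toReal - (μ (E j ∩ C)).toReal / (μ C).toReal|)
        ≤ 2 :=
  influence_row_sum_le_two_general μ n k E hE hhom S i hi C hC hCpos hiCpos hCNC
end
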